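/- For a skew-Hermitian matrix s ∈ 𝔲(n), the derivative of the matrix exponential satisfies: for all z ∈ 𝔲(n), exp(is)⁻¹ · (d/dt)|_{t=0} exp(is + itz) = ((1 - cos(ad s))/(ad s)) z + i ((sin(ad s))/(ad s)) z, where (1-cos x)/x and sin(x)/x are interpreted as entire power series evaluated at the operator ad s. -/

import Mathlib

open NormedSpace

attribute [local instance] Matrix.linftyOpNormedAddCommGroup Matrix.linftyOpNormedRing
  Matrix.linftyOpNormedAlgebra

/-!
Put `A = i s`, `B = i z`. Differentiating the exponential series term by term gives
`D = ∑ₙ (n+1)!⁻¹ ∑_{i+j=n} Aⁱ B Aʲ`. With `L`, `R` the commuting operators of left and right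
multiplication by `A`, the Cauchy product `exp A · ∑ₖ (k+1)!⁻¹ (R - L)ᵏ B` has the same `n`-th
term, by the identity `∑_{m+k=n} C(n+1, m) Lᵐ (R - L)ᵏ = ∑_{i+j=n} Lⁱ Rʲ` of commuting
variables (both sides satisfy `Sₙ₊₁ = Rⁿ⁺¹ + L Sₙ`). Hence `exp(-A) D = ∑ₖ (k+1)!⁻¹ (-ad A)ᵏ B`,
and as `-ad (i s) = -i ad s`, the even and odd `k` give the two series of the statement.
-/

open Finset
open scoped Nat

theorem Commute.sum_antidiagonal_choose_succ_mul_pow {R : Type*} [Semiring R] {x d : R}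
    (h : Commute x d) (N : ℕ) :
    ∑ p ∈ antidiagonal N, (N + 1).choose p.1 • (x ^ p.1 * d ^ p.2) =
      ∑ p ∈ antidiagonal N, x ^ p.1 * (x + d) ^ p.2 := by
  induction N with
  | zero => simp
  | succ N ih =>
    have hpascal : ∀ p ∈ antidiagonal N,
        (N + 1 + 1).choose (p.1 + 1) • (x ^ (p.1 + 1) * d ^ p.2) =
          x * ((N + 1).choose p.1 • (x ^ p.1 * d ^ p.2)) +
            (N + 1).choose (p.1 + 1) • (x ^ (p.1 + 1) * d ^ p.2) := by
      intro p _
      rw [Nat.choose_succ_succ', add_smul, pow_succ', mul_assoc, mul_smul_comm]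
    rw [Nat.sum_antidiagonal_succ, Nat.sum_antidiagonal_succ, sum_congr rfl hpascal,
      sum_add_distrib, ← mul_sum, ih, mul_sum]
    have hbinom := h.add_pow' (N + 1)
    rw [Nat.sum_antidiagonal_succ] at hbinom
    simp only [Nat.choose_zero_right, one_smul, pow_zero, one_mul, pow_succ'] at hbinom ⊢
    rw [hbinom]
    simp only [mul_assoc]
    abel

section Algebra

variable {𝕂 𝔸 : Type*} [Field 𝕂] [CharZero 𝕂] [Ring 𝔸] [Algebra 𝕂 𝔸]

theorem Commute.sum_antidiagonal_inv_factorial_smul_mul_pow {x d : 𝔸} (h : Commute x d)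
    (N : ℕ) :
    ∑ p ∈ antidiagonal N, ((p.1 ! : 𝕂)⁻¹ * ((p.2 + 1)! : 𝕂)⁻¹) • (x ^ p.1 * d ^ p.2) =
      ((N + 1)! : 𝕂)⁻¹ • ∑ p ∈ antidiagonal N, x ^ p.1 * (x + d) ^ p.2 := by
  rw [← h.sum_antidiagonal_choose_succ_mul_pow, smul_sum]
  refine sum_congr rfl fun p hp => ?_
  rw [HasAntidiagonal.mem_antidiagonal] at hp
  have hfact : (N + 1).choose p.1 * p.1 ! * (p.2 + 1)! = (N + 1)! := by
    rw [show p.2 + 1 = N + 1 - p.1 by omega]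
    exact Nat.choose_mul_factorial_mul_factorial (by omega)
  have hchoose : ((N + 1).choose p.1 : 𝕂) ≠ 0 := Nat.cast_ne_zero.2 (Nat.choose_pos (by omega)).ne'
  rw [← Nat.cast_smul_eq_nsmul 𝕂, smul_smul, ← hfact]
  push_cast
  field_simp

theorem sum_antidiagonal_inv_factorial_smul_pow_mul_iterate_commutator (A B : 𝔸) (N : ℕ) :
    ∑ p ∈ antidiagonal N, ((p.1 ! : 𝕂)⁻¹ • A ^ p.1) *
        (((p.2 + 1)! : 𝕂)⁻¹ • (fun X => X * A - A * X)^[p.2] B) =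
      ((N + 1)! : 𝕂)⁻¹ • ∑ p ∈ antidiagonal N, A ^ p.1 * B * A ^ p.2 := by
  set L := LinearMap.mulLeft 𝕂 A
  set R := LinearMap.mulRight 𝕂 A
  have hiter (k : ℕ) : (fun X => X * A - A * X)^[k] B = ((R - L) ^ k) B := by
    rw [Module.End.pow_apply]
    rfl
  have hLR : Commute L (R - L) := (LinearMap.commute_mulLeft_right A A).sub_right (.refl L)
  have := congrArg (· B) (hLR.sum_antidiagonal_inv_factorial_smul_mul_pow (𝕂 := 𝕂) N)
  simp only [add_sub_cancel, LinearMap.sum_apply, LinearMap.smul_apply, Module.End.mul_apply, L, R,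
    LinearMap.pow_mulLeft, LinearMap.pow_mulRight, LinearMap.mulLeft_apply,
    LinearMap.mulRight_apply] at this
  simpa only [hiter, smul_mul_smul_comm, mul_assoc] using this

end Algebra

section Norm

variable {𝔸 : Type*} [NormedRing 𝔸]

theorem norm_pow_mul_le (x y : 𝔸) (n : ℕ) : ‖x ^ n * y‖ ≤ ‖x‖ ^ n * ‖y‖ := by
  induction n with
  | zero => simp
  | succ n ih =>
    rw [pow_succ', mul_assoc, pow_succ', mul_assoc]
    exact (norm_mul_le _ _).trans (by gcongr)

theorem norm_mul_pow_le (x y : 𝔸) (n : ℕ) : ‖y * x ^ n‖ ≤ ‖y‖ * ‖x‖ ^ n := by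
  induction n with
  | zero => simp
  | succ n ih =>
    rw [pow_succ, ← mul_assoc, pow_succ, ← mul_assoc]
    exact (norm_mul_le _ _).trans (by gcongr)

theorem norm_sum_antidiagonal_pow_mul_mul_pow_le (x y : 𝔸) (N : ℕ) :
    ‖∑ p ∈ antidiagonal N, x ^ p.1 * y * x ^ p.2‖ ≤ (N + 1) * (‖x‖ ^ N * ‖y‖) := by
  calc ‖∑ p ∈ antidiagonal N, x ^ p.1 * y * x ^ p.2‖
      ≤ ∑ p ∈ antidiagonal N, ‖x ^ p.1 * y * x ^ p.2‖ := norm_sum_le _ _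
    _ ≤ ∑ _p ∈ antidiagonal N, ‖x‖ ^ N * ‖y‖ := by
      refine sum_le_sum fun p hp => ?_
      rw [← HasAntidiagonal.mem_antidiagonal.1 hp, pow_add, mul_right_comm]
      exact (norm_mul_pow_le _ _ _).trans
        (mul_le_mul_of_nonneg_right (norm_pow_mul_le _ _ _) (by positivity))
    _ = (N + 1) * (‖x‖ ^ N * ‖y‖) := by simp

theorem norm_iterate_commutator_le (A B : 𝔸) (k : ℕ) :
    ‖(fun X => X * A - A * X)^[k] B‖ ≤ (2 * ‖A‖) ^ k * ‖B‖ := by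
  induction k with
  | zero => simp
  | succ k ih =>
    set Y := (fun X => X * A - A * X)^[k] B
    rw [Function.iterate_succ_apply']
    calc ‖Y * A - A * Y‖ ≤ ‖Y‖ * ‖A‖ + ‖A‖ * ‖Y‖ :=
          (norm_sub_le _ _).trans (add_le_add (norm_mul_le _ _) (norm_mul_le _ _))
      _ = 2 * ‖A‖ * ‖Y‖ := by ring
      _ ≤ 2 * ‖A‖ * ((2 * ‖A‖) ^ k * ‖B‖) := by gcongr
      _ = (2 * ‖A‖) ^ (k + 1) * ‖B‖ := by ring

end Norm

theorem hasDerivAt_add_smul_pow_succ {𝕂 𝔸 : Type*} [NontriviallyNormedField 𝕂] [NormedRing 𝔸]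
    [NormedAlgebra 𝕂 𝔸] (A B : 𝔸) (N : ℕ) (t : 𝕂) :
    HasDerivAt (fun t : 𝕂 => (A + t • B) ^ (N + 1))
      (∑ p ∈ antidiagonal N, (A + t • B) ^ p.1 * B * (A + t • B) ^ p.2) t := by
  have hline : HasDerivAt (fun t : 𝕂 => A + t • B) B t := by
    simpa using ((hasDerivAt_id t).smul_const B).const_add A
  induction N with
  | zero => simpa using hline
  | succ N ih =>
    simp_rw [pow_succ _ (N + 1)]
    convert ih.fun_mul hline using 1
    rw [Nat.sum_antidiagonal_succ', sum_mul]
    simp [pow_succ, mul_assoc, add_comm]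

section Exp

variable {𝕂 𝔸 : Type*} [RCLike 𝕂] [NormedRing 𝔸] [NormedAlgebra 𝕂 𝔸]

theorem summable_norm_inv_factorial_succ_smul_iterate_commutator (A B : 𝔸) :
    Summable fun k => ‖((k + 1)! : 𝕂)⁻¹ • (fun X => X * A - A * X)^[k] B‖ := by
  refine .of_nonneg_of_le (fun _ => norm_nonneg _) (fun k => ?_)
    ((Real.summable_pow_div_factorial (2 * ‖A‖)).mul_right ‖B‖)
  rw [norm_smul, norm_inv, RCLike.norm_natCast, div_mul_eq_mul_div, inv_mul_eq_div]
  have hfact : (k ! : ℝ) ≤ (k + 1)! := by exact_mod_cast Nat.factorial_le k.le_succ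
  exact div_le_div₀ (by positivity) (norm_iterate_commutator_le A B k) (by positivity) hfact

variable [CompleteSpace 𝔸]

variable (𝕂) in
theorem exp_eq_one_add_tsum_inv_factorial_succ_smul_pow (x : 𝔸) :
    exp x = 1 + ∑' N : ℕ, ((N + 1)! : 𝕂)⁻¹ • x ^ (N + 1) := by
  rw [congrFun (exp_eq_tsum 𝕂) x, (expSeries_summable' (𝕂 := 𝕂) x).tsum_eq_zero_add]
  simp

theorem hasDerivAt_exp_add_smul_eq_tsum (A B : 𝔸) :
    HasDerivAt (fun t : 𝕂 => exp (A + t • B))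
      (∑' N : ℕ, ((N + 1)! : 𝕂)⁻¹ • ∑ p ∈ antidiagonal N, A ^ p.1 * B * A ^ p.2) 0 := by
  set C := ‖A‖ + ‖B‖
  have hbound (N : ℕ) (t : 𝕂) (ht : t ∈ Metric.ball 0 1) :
      ‖((N + 1)! : 𝕂)⁻¹ • ∑ p ∈ antidiagonal N, (A + t • B) ^ p.1 * B * (A + t • B) ^ p.2‖ ≤
        C ^ N / N ! * ‖B‖ := by
    have hX : ‖A + t • B‖ ≤ C := by
      rw [mem_ball_zero_iff] at ht
      refine (norm_add_le _ _).trans (add_le_add_right ?_ _)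
      rw [norm_smul]
      exact mul_le_of_le_one_left (norm_nonneg _) ht.le
    rw [norm_smul, norm_inv, RCLike.norm_natCast, Nat.factorial_succ]
    calc (((N + 1) * N ! : ℕ) : ℝ)⁻¹ *
          ‖∑ p ∈ antidiagonal N, (A + t • B) ^ p.1 * B * (A + t • B) ^ p.2‖
        ≤ (((N + 1) * N ! : ℕ) : ℝ)⁻¹ * ((N + 1) * (C ^ N * ‖B‖)) := by
          gcongr
          exact (norm_sum_antidiagonal_pow_mul_mul_pow_le _ _ N).trans (by gcongr)
      _ = C ^ N / N ! * ‖B‖ := by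
          push_cast
          field_simp
  have hderiv := hasDerivAt_tsum_of_isPreconnected
    ((Real.summable_pow_div_factorial C).mul_right ‖B‖) Metric.isOpen_ball
    (convex_ball (0 : 𝕂) 1).isPreconnected
    (fun N t _ => (hasDerivAt_add_smul_pow_succ A B N t).const_smul ((N + 1)! : 𝕂)⁻¹)
    hbound (Metric.mem_ball_self one_pos)
    (by simpa using (summable_nat_add_iff 1).2 (expSeries_summable' (𝕂 := 𝕂) A))
    (Metric.mem_ball_self one_pos)
  simp_rw [exp_eq_one_add_tsum_inv_factorial_succ_smul_pow 𝕂]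
  simpa using hderiv.const_add 1

theorem exp_mul_tsum_inv_factorial_succ_smul_iterate_commutator (A B : 𝔸) :
    exp A * ∑' k : ℕ, ((k + 1)! : 𝕂)⁻¹ • (fun X => X * A - A * X)^[k] B =
      ∑' N : ℕ, ((N + 1)! : 𝕂)⁻¹ • ∑ p ∈ antidiagonal N, A ^ p.1 * B * A ^ p.2 := by
  rw [exp_eq_tsum 𝕂, tsum_mul_tsum_eq_tsum_sum_antidiagonal_of_summable_norm
    (norm_expSeries_summable' A) (summable_norm_inv_factorial_succ_smul_iterate_commutator A B)]
  exact tsum_congr (sum_antidiagonal_inv_factorial_smul_pow_mul_iterate_commutator A B)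

theorem hasDerivAt_exp_add_smul (A B : 𝔸) :
    HasDerivAt (fun t : 𝕂 => exp (A + t • B))
      (exp A * ∑' k : ℕ, ((k + 1)! : 𝕂)⁻¹ • (fun X => X * A - A * X)^[k] B) 0 := by
  rw [exp_mul_tsum_inv_factorial_succ_smul_iterate_commutator]
  exact hasDerivAt_exp_add_smul_eq_tsum A B

end Exp

theorem iterate_commutator_smul_smul {R 𝔸 : Type*} [CommRing R] [Ring 𝔸] [Algebra R 𝔸]
    (c c' : R) (s z : 𝔸) (k : ℕ) :
    (fun X => X * (c • s) - (c • s) * X)^[k] (c' • z) =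
      ((-c) ^ k * c') • (fun X => s * X - X * s)^[k] z := by
  induction k with
  | zero => simp
  | succ k ih =>
    rw [Function.iterate_succ_apply', Function.iterate_succ_apply', ih]
    simp only [mul_smul_comm, smul_mul_assoc, smul_smul, pow_succ, smul_sub]
    module

theorem stmt5_general {n : ℕ} (s z : Matrix (Fin n) (Fin n) ℂ)
    (D : Matrix (Fin n) (Fin n) ℂ)
    (hD : HasDerivAt
      (fun t : ℝ => exp (Complex.I • s + (t : ℂ) • (Complex.I • z))) D 0) :
    (exp (Complex.I • s))⁻¹ * D =
      (∑' j : ℕ, ((-1 : ℂ) ^ j / (2 * j + 2).factorial) •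
          ((fun X => s * X - X * s)^[2 * j + 1] z)) +
        Complex.I • (∑' j : ℕ, ((-1 : ℂ) ^ j / (2 * j + 1).factorial) •
          ((fun X => s * X - X * s)^[2 * j] z)) := by
  set F := fun k : ℕ => ((k + 1)! : ℂ)⁻¹ •
    (fun X => X * (Complex.I • s) - (Complex.I • s) * X)^[k] (Complex.I • z)
  have hDexp : D = exp (Complex.I • s) * ∑' k, F k := by
    have hexp := hasDerivAt_exp_add_smul (𝕂 := ℂ) (Complex.I • s) (Complex.I • z)
    rw [← Complex.ofReal_zero] at hexp
    have hreal := hexp.scomp (0 : ℝ) Complex.ofRealCLM.hasDerivAt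
    simp only [Complex.ofRealCLM_apply, Complex.ofReal_one, one_smul] at hreal
    exact hD.unique hreal
  have hF : Summable F :=
    (summable_norm_inv_factorial_succ_smul_iterate_commutator
      (Complex.I • s) (Complex.I • z)).of_norm
  rw [hDexp, ← mul_assoc, ← Matrix.exp_neg,
    ← Matrix.exp_add_of_commute _ _ (Commute.refl (Complex.I • s)).neg_left, neg_add_cancel,
    exp_zero, one_mul]
  rw [← tsum_even_add_odd (hF.comp_injective fun a b h => by omega)
      (hF.comp_injective fun a b h => by omega), add_comm, ← tsum_const_smul'']
  congr 1 <;> refine tsum_congr fun j => ?_ <;>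
    simp only [F, iterate_commutator_smul_smul, smul_smul] <;> congr 1
  · rw [pow_succ, pow_mul, neg_sq, Complex.I_sq]
    linear_combination (-(-1 : ℂ) ^ j / ((2 * j + 2)! : ℂ)) * Complex.I_sq
  · rw [pow_mul, neg_sq, Complex.I_sq]
    ring

/-- For skew-Hermitian `s, z ∈ 𝔲(n)`,
`exp(is)⁻¹ · (d/dt)|₀ exp(is + itz) = ((1-cos(ad s))/(ad s)) z + i (sin(ad s)/(ad s)) z`,
the operator series being `Σ_{j≥0} (-1)^j (ad s)^{2j+1}/(2j+2)!` and
`Σ_{j≥0} (-1)^j (ad s)^{2j}/(2j+1)!`, with `ad s X = sX - Xs`. -/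
theorem stmt5 {n : ℕ} (s z : Matrix (Fin n) (Fin n) ℂ)
    (hs : s.conjTranspose = -s) (hz : z.conjTranspose = -z)
    (D : Matrix (Fin n) (Fin n) ℂ)
    (hD : HasDerivAt
      (fun t : ℝ => exp (Complex.I • s + (t : ℂ) • (Complex.I • z))) D 0) :
    (exp (Complex.I • s))⁻¹ * D =
      (∑' j : ℕ, ((-1 : ℂ) ^ j / (2 * j + 2).factorial) •
          ((fun X => s * X - X * s)^[2 * j + 1] z)) +
        Complex.I • (∑' j : ℕ, ((-1 : ℂ) ^ j / (2 * j + 1).factorial) •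
          ((fun X => s * X - X * s)^[2 * j] z)) :=
  stmt5_general s z D hD
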